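/- The long-wave bright rogue wave attains its maximum amplitude 6 at the origin: for all real x, t one has L_brw1(x,t) ≤ 6, and L_brw1(0,0) = 6. -/
import Mathlib


/-- The bright-bright rogue-wave long-wave component of the Yajima-Oikawa system. -/
noncomputable def L_brw1 (x t : ℝ) : ℝ :=
  3 * (3 * t ^ 2 - 6 * t * x - 6 * x ^ 2 + 2) / (3 * t ^ 2 + 3 * t * x + 3 * x ^ 2 + 1) ^ 2

/-- The long-wave bright rogue wave attains its maximum amplitude 6 at the origin. -/
theorem L_brw1_max_amplitude :
    (∀ x t : ℝ, L_brw1 x t ≤ 6) ∧ L_brw1 0 0 = 6 := by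
  constructor
  · intro x t
    have hD : 0 < 3 * t ^ 2 + 3 * t * x + 3 * x ^ 2 + 1 := by nlinarith [sq_nonneg (t + x), sq_nonneg t, sq_nonneg x]
    rw [L_brw1, div_le_iff₀ (by positivity)]
    nlinarith [sq_nonneg (t + x), sq_nonneg (t - x), sq_nonneg (t*x), sq_nonneg t, sq_nonneg x, sq_nonneg (t^2 - x^2), sq_nonneg (t^2 + t*x + x^2), mul_pos hD hD]
  · norm_num [L_brw1]
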